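/- arXiv:1004.0986 — 3 statements merged into one kernel-verified Lean document; each statement's English description precedes it below -/
import Mathlib

section
/- Let K = ℚ(√d) with d a positive squarefree integer and ε a fundamental unit of O. If γ, γ' ∈ O are nonzero and log|γ/γ̄| ≡ log|γ'/γ̄'| (mod log|ε²|), then either γ ∼ γ' or γ ∼ √d·γ'. -/
open MeasureTheory

/-- ω ∈ ℝ for the real quadratic field ℚ(√d), d > 0:
    ω = √d if d ≡ 2,3 mod 4 and ω = (1+√d)/2 if d ≡ 1 mod 4. -/
noncomputable def omgR (d : ℤ) : ℝ :=
  if d % 4 = 1 then (1 + Real.sqrt d) / 2 else Real.sqrt d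

/-- The conjugate ω̄ of ω. -/
noncomputable def omgRBar (d : ℤ) : ℝ :=
  if d % 4 = 1 then (1 - Real.sqrt d) / 2 else -Real.sqrt d

/-- The element a + bω of O = ℤ ⊕ ℤω ⊂ ℝ. -/
noncomputable def eltR (d a b : ℤ) : ℝ := (a : ℝ) + (b : ℝ) * omgR d

/-- The conjugate a + bω̄ of a + bω. -/
noncomputable def eltRBar (d a b : ℤ) : ℝ := (a : ℝ) + (b : ℝ) * omgRBar d

/-- The norm N(a + bω) = (a+bω)(a+bω̄) as a rational integer. -/
def NrmR (d a b : ℤ) : ℤ :=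
  if d % 4 = 1 then a ^ 2 + a * b + b ^ 2 * ((1 - d) / 4) else a ^ 2 - d * b ^ 2

/-- Membership in the ring of integers O = ℤ ⊕ ℤω ⊂ ℝ. -/
def InOR (d : ℤ) (x : ℝ) : Prop := ∃ a b : ℤ, x = eltR d a b

/-- x is a unit of the ring O. -/
def IsUnitOR (d : ℤ) (x : ℝ) : Prop := InOR d x ∧ ∃ y : ℝ, InOR d y ∧ x * y = 1

/-- ε is a fundamental unit of O: the unit group of O is {±εⁿ : n ∈ ℤ}. -/
def IsFundamentalUnit (d : ℤ) (ε : ℝ) : Prop :=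
  ∀ x : ℝ, IsUnitOR d x ↔ ∃ n : ℤ, x = ε ^ n ∨ x = -(ε ^ n)

/-- γ ∼ γ' : there are a unit υ and positive integers m, n with υmγ' = nγ. -/
def SimR (d : ℤ) (γ γ' : ℝ) : Prop :=
  ∃ υ : ℝ, IsUnitOR d υ ∧ ∃ m n : ℕ, 0 < m ∧ 0 < n ∧ υ * (m : ℝ) * γ' = (n : ℝ) * γ

/- ---------------- auxiliary lemmas ---------------- -/

private lemma sqrt_irr (d : ℤ) (hd : Squarefree d) (hdpos : 0 < d) (hd1 : d ≠ 1) :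
    Irrational (Real.sqrt (d : ℝ)) := by
  rw [show ((d : ℝ)) = ((d : ℤ) : ℝ) from rfl, irrational_sqrt_intCast_iff]
  refine ⟨fun hsq => ?_, hdpos.le⟩
  obtain ⟨r, hr⟩ := hsq
  have hu : IsUnit r := hd r (by rw [hr])
  rcases Int.isUnit_iff.mp hu with h | h <;> subst h <;> norm_num at hr <;> exact hd1 hr

private lemma omgR_irr (d : ℤ) (h : Irrational (Real.sqrt (d : ℝ))) :
    Irrational (omgR d) := by
  unfold omgR; split_ifs with h4
  · rintro ⟨q, hq⟩
    exact h ⟨2 * q - 1, by push_cast; linarith⟩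
  · exact h

private lemma omgRBar_irr (d : ℤ) (h : Irrational (Real.sqrt (d : ℝ))) :
    Irrational (omgRBar d) := by
  unfold omgRBar; split_ifs with h4
  · rintro ⟨q, hq⟩
    exact h ⟨1 - 2 * q, by push_cast; linarith⟩
  · rintro ⟨q, hq⟩
    exact h ⟨-q, by push_cast; linarith⟩

private lemma elt_zero {W : ℝ} (hW : Irrational W) {a b : ℤ}
    (h : (a : ℝ) + (b : ℝ) * W = 0) : a = 0 ∧ b = 0 := by
  rcases eq_or_ne b 0 with hb | hb
  · refine ⟨?_, hb⟩; subst hb; simpa using h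
  · exfalso
    have hbR : (b : ℝ) ≠ 0 := Int.cast_ne_zero.2 hb
    refine hW ⟨(-a : ℚ) / (b : ℚ), ?_⟩
    push_cast
    rw [div_eq_iff hbR]
    linear_combination -h

private def mfst (d a b a' b' : ℤ) : ℤ :=
  if d % 4 = 1 then a * a' + b * b' * ((d - 1) / 4) else a * a' + d * (b * b')

private def msnd (d a b a' b' : ℤ) : ℤ :=
  if d % 4 = 1 then a * b' + a' * b + b * b' else a * b' + a' * b

private lemma eltR_mul (d : ℤ) (hd0 : 0 ≤ d) (a b a' b' : ℤ) :
    eltR d a b * eltR d a' b' = eltR d (mfst d a b a' b') (msnd d a b a' b') := by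
  have hs : Real.sqrt (d : ℝ) * Real.sqrt (d : ℝ) = (d : ℝ) :=
    Real.mul_self_sqrt (by exact_mod_cast hd0)
  unfold eltR omgR mfst msnd
  split_ifs with h
  · obtain ⟨q, rfl⟩ : ∃ q, d = 4 * q + 1 := ⟨d / 4, by omega⟩
    rw [show (4 * q + 1 - 1) / 4 = q from by omega]
    push_cast at hs ⊢
    linear_combination ((b : ℝ) * (b' : ℝ) / 4) * hs
  · push_cast at hs ⊢
    linear_combination ((b : ℝ) * (b' : ℝ)) * hs

private lemma eltRBar_mul (d : ℤ) (hd0 : 0 ≤ d) (a b a' b' : ℤ) :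
    eltRBar d a b * eltRBar d a' b' = eltRBar d (mfst d a b a' b') (msnd d a b a' b') := by
  have hs : Real.sqrt (d : ℝ) * Real.sqrt (d : ℝ) = (d : ℝ) :=
    Real.mul_self_sqrt (by exact_mod_cast hd0)
  unfold eltRBar omgRBar mfst msnd
  split_ifs with h
  · obtain ⟨q, rfl⟩ : ∃ q, d = 4 * q + 1 := ⟨d / 4, by omega⟩
    rw [show (4 * q + 1 - 1) / 4 = q from by omega]
    push_cast at hs ⊢
    linear_combination ((b : ℝ) * (b' : ℝ) / 4) * hs
  · push_cast at hs ⊢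
    linear_combination ((b : ℝ) * (b' : ℝ)) * hs

private lemma elt_mul_bar (d : ℤ) (hd0 : 0 ≤ d) (a b : ℤ) :
    eltR d a b * eltRBar d a b = ((NrmR d a b : ℤ) : ℝ) := by
  have hs : Real.sqrt (d : ℝ) * Real.sqrt (d : ℝ) = (d : ℝ) :=
    Real.mul_self_sqrt (by exact_mod_cast hd0)
  unfold eltR eltRBar omgR omgRBar NrmR
  split_ifs with h
  · obtain ⟨q, rfl⟩ : ∃ q, d = 4 * q + 1 := ⟨d / 4, by omega⟩
    rw [show (1 - (4 * q + 1)) / 4 = -q from by omega]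
    push_cast at hs ⊢
    linear_combination (-(b : ℝ) ^ 2 / 4) * hs
  · push_cast at hs ⊢
    linear_combination (-(b : ℝ) ^ 2) * hs

private def dA (d a b : ℤ) : ℤ := if d % 4 = 1 then 2 * a + b else 2 * a

private def dB (d a b : ℤ) : ℤ := if d % 4 = 1 then b else 2 * b

private lemma two_eltR (d a b : ℤ) :
    2 * eltR d a b = (dA d a b : ℝ) + (dB d a b : ℝ) * Real.sqrt d := by
  unfold eltR omgR dA dB
  split_ifs with h <;> push_cast <;> ring

private lemma two_eltRBar (d a b : ℤ) :
    2 * eltRBar d a b = (dA d a b : ℝ) - (dB d a b : ℝ) * Real.sqrt d := by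
  unfold eltRBar omgRBar dA dB
  split_ifs with h <;> push_cast <;> ring

private lemma conj_pair (d : ℤ) (hd0 : 0 ≤ d) (x y x' y' u v : ℤ) :
    ∃ P Q : ℤ,
      8 * (eltR d x y * eltRBar d x' y' * eltRBar d u v) = (P : ℝ) + (Q : ℝ) * Real.sqrt d ∧
      8 * (eltRBar d x y * eltR d x' y' * eltR d u v) = (P : ℝ) - (Q : ℝ) * Real.sqrt d := by
  have hs : Real.sqrt (d : ℝ) * Real.sqrt (d : ℝ) = (d : ℝ) :=
    Real.mul_self_sqrt (by exact_mod_cast hd0)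
  set A := dA d x y
  set B := dB d x y
  set C := dA d x' y'
  set E := dB d x' y'
  set F := dA d u v
  set G := dB d u v
  refine ⟨A * C * F + d * (A * E * G - B * E * F - B * C * G),
    B * C * F - A * E * F - A * C * G + d * (B * E * G), ?_, ?_⟩
  · have h1 : 8 * (eltR d x y * eltRBar d x' y' * eltRBar d u v) =
        (2 * eltR d x y) * (2 * eltRBar d x' y') * (2 * eltRBar d u v) := by ring
    rw [h1, two_eltR, two_eltRBar, two_eltRBar]
    push_cast
    linear_combination ((A : ℝ) * E * G - (B : ℝ) * E * F - (B : ℝ) * C * G +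
      (B : ℝ) * E * G * Real.sqrt d) * hs
  · have h1 : 8 * (eltRBar d x y * eltR d x' y' * eltR d u v) =
        (2 * eltRBar d x y) * (2 * eltR d x' y') * (2 * eltR d u v) := by ring
    rw [h1, two_eltRBar, two_eltR, two_eltR]
    push_cast
    linear_combination ((A : ℝ) * E * G - (B : ℝ) * E * F - (B : ℝ) * C * G -
      (B : ℝ) * E * G * Real.sqrt d) * hs

private lemma simR_of_int_eq (d : ℤ) (ε : ℝ) (hε : IsFundamentalUnit d ε) (k : ℤ)
    (γ γ' : ℝ) (c₁ c₂ : ℤ) (hc₁ : c₁ ≠ 0) (hγ : γ ≠ 0)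
    (h : (c₂ : ℝ) * (ε ^ k * γ') = (c₁ : ℝ) * γ) : SimR d γ γ' := by
  have hc₂ : c₂ ≠ 0 := by
    rintro rfl
    have h0 : (0 : ℝ) = (c₁ : ℝ) * γ := by simpa using h
    exact mul_ne_zero (Int.cast_ne_zero.2 hc₁) hγ h0.symm
  refine ⟨if 0 < c₁ * c₂ then ε ^ k else -(ε ^ k), ?_, c₂.natAbs, c₁.natAbs,
    Int.natAbs_pos.mpr hc₂, Int.natAbs_pos.mpr hc₁, ?_⟩
  · split_ifs
    · exact (hε _).mpr ⟨k, Or.inl rfl⟩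
    · exact (hε _).mpr ⟨k, Or.inr rfl⟩
  · rw [Nat.cast_natAbs, Nat.cast_natAbs, Int.cast_abs, Int.cast_abs]
    rcases hc₁.lt_or_gt with h₁ | h₁ <;> rcases hc₂.lt_or_gt with h₂ | h₂
    · rw [if_pos (mul_pos_of_neg_of_neg h₁ h₂),
        abs_of_neg (show (c₂ : ℝ) < 0 by exact_mod_cast h₂),
        abs_of_neg (show (c₁ : ℝ) < 0 by exact_mod_cast h₁)]
      linear_combination -h
    · rw [if_neg (by nlinarith : ¬ 0 < c₁ * c₂),
        abs_of_pos (show (0 : ℝ) < (c₂ : ℝ) by exact_mod_cast h₂),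
        abs_of_neg (show (c₁ : ℝ) < 0 by exact_mod_cast h₁)]
      linear_combination -h
    · rw [if_neg (by nlinarith : ¬ 0 < c₁ * c₂),
        abs_of_neg (show (c₂ : ℝ) < 0 by exact_mod_cast h₂),
        abs_of_pos (show (0 : ℝ) < (c₁ : ℝ) by exact_mod_cast h₁)]
      linear_combination h
    · rw [if_pos (mul_pos h₁ h₂),
        abs_of_pos (show (0 : ℝ) < (c₂ : ℝ) by exact_mod_cast h₂),
        abs_of_pos (show (0 : ℝ) < (c₁ : ℝ) by exact_mod_cast h₁)]
      linear_combination h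

/-- Lemma 2: in a real quadratic field, if log|γ/γ̄| ≡ log|γ'/γ̄'| mod log|ε²|
    (ε a fundamental unit), then γ ∼ γ' or γ ∼ √d·γ'. -/
theorem log_congruent_implies_equivalent
    (d : ℤ) (hd : Squarefree d) (hdpos : 0 < d) (hd1 : d ≠ 1)
    (ε : ℝ) (hε : IsFundamentalUnit d ε)
    (a b a' b' : ℤ) (hγ : eltR d a b ≠ 0) (hγ' : eltR d a' b' ≠ 0)
    (hcong : ∃ k : ℤ,
      Real.log |eltR d a b / eltRBar d a b| -
        Real.log |eltR d a' b' / eltRBar d a' b'| = (k : ℝ) * Real.log (ε ^ 2)) :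
    SimR d (eltR d a b) (eltR d a' b') ∨
      SimR d (eltR d a b) (Real.sqrt d * eltR d a' b') := by
  obtain ⟨k, hk⟩ := hcong
  have hdR : (0 : ℝ) < (d : ℝ) := by exact_mod_cast hdpos
  have hsne : Real.sqrt d ≠ 0 := ne_of_gt (Real.sqrt_pos.2 hdR)
  have hirr := sqrt_irr d hd hdpos hd1
  have hωirr := omgR_irr d hirr
  have hωbirr := omgRBar_irr d hirr
  -- conjugates are nonzero
  have hbar_ne : ∀ x y : ℤ, eltR d x y ≠ 0 → eltRBar d x y ≠ 0 := by
    intro x y hx hbar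
    obtain ⟨h1, h2⟩ := elt_zero hωbirr hbar
    exact hx (by simp [eltR, h1, h2])
  have hγb := hbar_ne a b hγ
  have hγ'b := hbar_ne a' b' hγ'
  -- ε is nonzero
  obtain ⟨-, y₀, -, hy₀⟩ := (hε ε).mpr ⟨1, Or.inl (zpow_one ε).symm⟩
  have hεne : ε ≠ 0 := left_ne_zero_of_mul_eq_one hy₀
  have hζne : ε ^ k ≠ 0 := zpow_ne_zero k hεne
  -- coordinates of ζ = ε^k and its inverse
  obtain ⟨⟨s, t, hst⟩, ζ', ⟨⟨s', t', hst'⟩, hinv⟩⟩ := (hε (ε ^ k)).mpr ⟨k, Or.inl rfl⟩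
  have hinv' : eltR d s t * eltR d s' t' = 1 := by rw [← hst, ← hst']; exact hinv
  -- the norm n₀ of ζ is ±1
  set n₀ := NrmR d s t with hn₀def
  have hn₀ : ε ^ k * eltRBar d s t = (n₀ : ℝ) := by
    rw [hst]; exact elt_mul_bar d hdpos.le s t
  have hco : mfst d s t s' t' - 1 = 0 ∧ msnd d s t s' t' = 0 := by
    apply elt_zero hωirr
    have h1eq : eltR d (mfst d s t s' t') (msnd d s t s' t') = 1 := by
      rw [← eltR_mul d hdpos.le]; exact hinv'
    unfold eltR at h1eq
    push_cast
    linarith [h1eq]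
  have hbar1 : eltRBar d s t * eltRBar d s' t' = 1 := by
    rw [eltRBar_mul d hdpos.le]
    have h1 : mfst d s t s' t' = 1 := by omega
    have h2 : msnd d s t s' t' = 0 := hco.2
    rw [h1, h2]
    simp [eltRBar]
  have hn₀mul : n₀ * NrmR d s' t' = 1 := by
    have : ((n₀ * NrmR d s' t' : ℤ) : ℝ) = 1 := by
      push_cast
      rw [← elt_mul_bar d hdpos.le s t, ← elt_mul_bar d hdpos.le s' t']
      calc eltR d s t * eltRBar d s t * (eltR d s' t' * eltRBar d s' t')
          = (eltR d s t * eltR d s' t') * (eltRBar d s t * eltRBar d s' t') := by ring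
        _ = 1 := by rw [hinv', hbar1, mul_one]
    exact_mod_cast this
  have hn₀unit : n₀ = 1 ∨ n₀ = -1 := Int.eq_one_or_neg_one_of_mul_eq_one hn₀mul
  have hn₀abs : |(n₀ : ℝ)| = 1 := by rcases hn₀unit with h | h <;> simp [h]
  have hn₀ne : (n₀ : ℝ) ≠ 0 := by rcases hn₀unit with h | h <;> simp [h]
  have hζbne : eltRBar d s t ≠ 0 := by
    intro h0
    rw [h0, mul_zero] at hn₀
    exact hn₀ne hn₀.symm
  -- from the log congruence, |γ/γ̄| = |γ'/γ̄'| (ε^k)²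
  have hpos1 : (0 : ℝ) < |eltR d a b / eltRBar d a b| :=
    abs_pos.mpr (div_ne_zero hγ hγb)
  have hpos2 : (0 : ℝ) < |eltR d a' b' / eltRBar d a' b'| :=
    abs_pos.mpr (div_ne_zero hγ' hγ'b)
  have hsqpos : (0 : ℝ) < (ε ^ k) ^ 2 :=
    lt_of_le_of_ne (sq_nonneg _) (Ne.symm (pow_ne_zero 2 hζne))
  have hpow : (ε ^ 2 : ℝ) ^ k = (ε ^ k) ^ 2 := by
    rw [← zpow_natCast ε 2, ← zpow_mul, ← zpow_natCast (ε ^ k) 2, ← zpow_mul, mul_comm]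
  have habs1 : |eltR d a b / eltRBar d a b| = |eltR d a' b' / eltRBar d a' b'| * (ε ^ k) ^ 2 := by
    apply Real.log_injOn_pos (Set.mem_Ioi.2 hpos1) (Set.mem_Ioi.2 (mul_pos hpos2 hsqpos))
    rw [Real.log_mul hpos2.ne' hsqpos.ne']
    have : (k : ℝ) * Real.log (ε ^ 2) = Real.log ((ε ^ k) ^ 2) := by
      rw [← hpow, Real.log_zpow]
    linarith [hk, this]
  have habs2 : |eltR d a b| * |eltRBar d a' b'| =
      (ε ^ k) ^ 2 * (|eltRBar d a b| * |eltR d a' b'|) := by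
    rw [abs_div, abs_div] at habs1
    have hb1 : |eltRBar d a b| ≠ 0 := abs_ne_zero.mpr hγb
    have hb2 : |eltRBar d a' b'| ≠ 0 := abs_ne_zero.mpr hγ'b
    field_simp at habs1
    linarith [habs1]
  have hE : (ε ^ k) ^ 2 * |eltRBar d s t| = |ε ^ k| := by
    calc (ε ^ k) ^ 2 * |eltRBar d s t| = |ε ^ k| * (|ε ^ k| * |eltRBar d s t|) := by
          rw [← sq_abs]; ring
      _ = |ε ^ k| * |ε ^ k * eltRBar d s t| := by rw [abs_mul]
      _ = |ε ^ k| * |(n₀ : ℝ)| := by rw [hn₀]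
      _ = |ε ^ k| := by rw [hn₀abs, mul_one]
  have hfinal : |eltR d a b * eltRBar d a' b' * eltRBar d s t| =
      |eltRBar d a b * eltR d a' b' * ε ^ k| := by
    rw [abs_mul, abs_mul, abs_mul, abs_mul]
    calc |eltR d a b| * |eltRBar d a' b'| * |eltRBar d s t|
        = ((ε ^ k) ^ 2 * (|eltRBar d a b| * |eltR d a' b'|)) * |eltRBar d s t| := by
          rw [habs2]
      _ = (|eltRBar d a b| * |eltR d a' b'|) * ((ε ^ k) ^ 2 * |eltRBar d s t|) := by ring
      _ = |eltRBar d a b| * |eltR d a' b'| * |ε ^ k| := by rw [hE]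
  -- coordinates of the two products
  obtain ⟨P, Q, e1, e2⟩ := conj_pair d hdpos.le a b a' b' s t
  have e2' : 8 * (eltRBar d a b * eltR d a' b' * ε ^ k) = (P : ℝ) - (Q : ℝ) * Real.sqrt d := by
    rw [hst]; exact e2
  -- norm facts for γ'
  have hNγ' : eltR d a' b' * eltRBar d a' b' = ((NrmR d a' b' : ℤ) : ℝ) :=
    elt_mul_bar d hdpos.le a' b'
  have hN'ne : NrmR d a' b' ≠ 0 := by
    intro h0
    rw [h0] at hNγ'
    exact mul_ne_zero hγ' hγ'b (by simpa using hNγ')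
  have hc₁ : 8 * NrmR d a' b' * n₀ ≠ 0 :=
    mul_ne_zero (mul_ne_zero (by norm_num) hN'ne) (by exact_mod_cast fun h => hn₀ne (by rw [h]; simp))
  rcases abs_eq_abs.mp hfinal with hxy | hxy
  · -- γ ∼ γ'
    left
    have hQ0 : (Q : ℝ) = 0 := by
      have h0 : (Q : ℝ) * Real.sqrt d = 0 := by linarith [e1, e2', hxy]
      rcases mul_eq_zero.mp h0 with h | h
      · exact h
      · exact absurd h hsne
    have e1' : 8 * (eltR d a b * eltRBar d a' b' * eltRBar d s t) = (P : ℝ) := by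
      rw [e1, hQ0]; ring
    apply simR_of_int_eq d ε hε k _ _ (8 * NrmR d a' b' * n₀) P hc₁ hγ
    calc (P : ℝ) * (ε ^ k * eltR d a' b')
        = (8 * (eltR d a b * eltRBar d a' b' * eltRBar d s t)) * (ε ^ k * eltR d a' b') := by
          rw [e1']
      _ = 8 * eltR d a b * (eltR d a' b' * eltRBar d a' b') * (ε ^ k * eltRBar d s t) := by
          ring
      _ = 8 * eltR d a b * ((NrmR d a' b' : ℤ) : ℝ) * ((n₀ : ℤ) : ℝ) := by rw [hNγ', hn₀]
      _ = ((8 * NrmR d a' b' * n₀ : ℤ) : ℝ) * eltR d a b := by push_cast; ring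
  · -- γ ∼ √d γ'
    right
    have hP0 : (P : ℝ) = 0 := by linarith [e1, e2', hxy]
    have e1' : 8 * (eltR d a b * eltRBar d a' b' * eltRBar d s t) = (Q : ℝ) * Real.sqrt d := by
      rw [e1, hP0]; ring
    apply simR_of_int_eq d ε hε k _ _ (8 * NrmR d a' b' * n₀) Q hc₁ hγ
    calc (Q : ℝ) * (ε ^ k * (Real.sqrt d * eltR d a' b'))
        = ((Q : ℝ) * Real.sqrt d) * (ε ^ k * eltR d a' b') := by ring
      _ = (8 * (eltR d a b * eltRBar d a' b' * eltRBar d s t)) * (ε ^ k * eltR d a' b') := by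
          rw [← e1']
      _ = 8 * eltR d a b * (eltR d a' b' * eltRBar d a' b') * (ε ^ k * eltRBar d s t) := by
          ring
      _ = 8 * eltR d a b * ((NrmR d a' b' : ℤ) : ℝ) * ((n₀ : ℤ) : ℝ) := by rw [hNγ', hn₀]
      _ = ((8 * NrmR d a' b' * n₀ : ℤ) : ℝ) * eltR d a b := by push_cast; ring
end

section
/- Let K = ℚ(√d) with d a positive squarefree integer and ε a fundamental unit of O. Let α ∈ V be a visible point and let α' ∈ V be any visible point with α' ≁ α and log|α'/ᾱ'| ≡ log|α/ᾱ| (mod log|ε²|). Then √(|N(α)N(α')|) = √d · |N(α)| / gcd(N(α), d), where gcd denotes the positive greatest common divisor of the integers N(α) and d. -/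
open MeasureTheory

/-!
Realise `O = ℤ[ω]` as `QuadraticAlgebra ℤ c e` with `ω² = c + eω`, embedded in `ℝ`. The congruence
of logarithms says `α'ᾱ = ±w²ᾱ'α` for the unit `w = εᵏ`. Put `β = wα` and `γ = α'β̄`; then
`γ̄ = ±γ` and `γβ = N(β)α'`. If `γ̄ = γ`, then `γ` is a rational integer and `γβ = N(β)α'` says
`α' ∼ α`. Otherwise `γ = r√d`, so `N(α)N(α') = ±N(γ) = ∓dr²`, and comparing the contents (gcd of
the coordinates) of the two sides of `r√dβ = N(β)α'` gives `|N(α)| = |r| · c(√dβ)`. As `d` is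
squarefree and `β` is visible, `c(√dβ) = gcd(N(β), d)`.
-/

theorem Int.gcd_eq_gcd_of_dvd_sub_sq {d N X : ℤ} (hd : Squarefree d) (h : d ∣ N - X ^ 2) :
    Int.gcd N d = Int.gcd X d := by
  obtain ⟨k, hk⟩ := h
  rw [show N = X ^ 2 + d * k by linear_combination hk, Int.gcd_add_mul_left_left]
  refine Nat.dvd_antisymm ?_ (Int.gcd_dvd_gcd_of_dvd_left _ (dvd_pow_self X two_ne_zero))
  have hgd : (Int.gcd (X ^ 2) d : ℤ) ∣ d := Int.gcd_dvd_right _ _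
  rw [← Int.natCast_dvd_natCast]
  exact Int.dvd_coe_gcd
    (((hd.squarefree_of_dvd hgd).dvd_pow_iff_dvd two_ne_zero).mp (Int.gcd_dvd_left _ _)) hgd

theorem Int.gcd_sub_mul_eq_gcd_of_dvd_sub_sq {d N X Q : ℤ} (m : ℤ) (hd : Squarefree d)
    (hXQ : IsCoprime X Q) (h : d ∣ N - X ^ 2) : Int.gcd X (d * Q - m * X) = Int.gcd N d := by
  rw [Int.gcd_sub_mul_right_right, Int.gcd_eq_gcd_of_dvd_sub_sq hd h,
    Int.gcd_mul_left_right_of_gcd_eq_one (Int.isCoprime_iff_gcd_eq_one.mp hXQ)]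

theorem Real.exists_sign_mul_of_log_abs_div_sub {x y x' y' ε : ℝ} (hx : x ≠ 0) (hy : y ≠ 0)
    (hx' : x' ≠ 0) (hy' : y' ≠ 0) (hε : ε ≠ 0) {k : ℤ}
    (h : Real.log |x' / y'| - Real.log |x / y| = k * Real.log (ε ^ 2)) :
    ∃ s : ℤˣ, x' * y = s * (ε ^ k) ^ 2 * (y' * x) := by
  have hpow : (ε ^ k) ^ 2 = (ε ^ 2) ^ k := by
    rw [← zpow_natCast, ← zpow_natCast, ← zpow_mul, ← zpow_mul, mul_comm]
  have habs : |x' / y'| = |(ε ^ k) ^ 2 * (x / y)| := by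
    rw [abs_mul, abs_of_nonneg (sq_nonneg (ε ^ k))]
    refine Real.log_injOn_pos (by simp [hx', hy']) (by simp [hx, hy]; positivity) ?_
    rw [Real.log_mul (by positivity) (by simp [hx, hy]), hpow, Real.log_zpow]
    linarith
  rcases abs_eq_abs.mp habs with habs | habs
  · refine ⟨1, ?_⟩
    field_simp at habs
    push_cast
    linear_combination habs
  · refine ⟨-1, ?_⟩
    field_simp at habs
    push_cast
    linear_combination habs

theorem Real.sqrt_abs_mul_eq_of_abs_eq {d N N' r : ℤ} (hd : 0 < d) (h : |N * N'| = d * r ^ 2)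
    (hN : |N| = |r| * Int.gcd N d) :
    √((|N * N'| : ℤ) : ℝ) = √(d : ℝ) * ((|N| : ℤ) : ℝ) / (Int.gcd N d : ℝ) := by
  have hg : (Int.gcd N d : ℝ) ≠ 0 := by
    exact_mod_cast (Int.gcd_pos_of_ne_zero_right N hd.ne').ne'
  rw [h, hN]
  push_cast
  rw [Real.sqrt_mul (by exact_mod_cast hd.le), Real.sqrt_sq_eq_abs]
  field_simp

namespace QuadraticAlgebra

variable {a b : ℤ}

/-- The gcd of the coordinates; the visible points are those of content `1`. -/
def content (z : QuadraticAlgebra ℤ a b) : ℕ := Int.gcd z.re z.im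

theorem content_dvd_content_mul (y z : QuadraticAlgebra ℤ a b) : content z ∣ content (y * z) := by
  have hre : (content z : ℤ) ∣ z.re := Int.gcd_dvd_left _ _
  have him : (content z : ℤ) ∣ z.im := Int.gcd_dvd_right _ _
  rw [← Int.natCast_dvd_natCast, content]
  apply Int.dvd_coe_gcd <;> simp only [re_mul, im_mul]
  · exact dvd_add (hre.mul_left _) (him.mul_left _)
  · exact dvd_add (dvd_add (him.mul_left _) (hre.mul_left _)) (him.mul_left _)

theorem content_units_mul (u : (QuadraticAlgebra ℤ a b)ˣ) (z : QuadraticAlgebra ℤ a b) :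
    content ((u : QuadraticAlgebra ℤ a b) * z) = content z := by
  refine Nat.dvd_antisymm ?_ (content_dvd_content_mul _ _)
  simpa using content_dvd_content_mul (↑u⁻¹ : QuadraticAlgebra ℤ a b) (↑u * z)

theorem content_smul (n : ℤ) (z : QuadraticAlgebra ℤ a b) :
    content (n • z) = n.natAbs * content z := by
  simp [content, Int.gcd_mul_left]

theorem ne_zero_of_content_eq_one {z : QuadraticAlgebra ℤ a b} (hz : content z = 1) : z ≠ 0 := by
  rintro rfl
  simp [content] at hz

theorem eq_intCast_of_star_eq {z : QuadraticAlgebra ℤ a b} (hz : star z = z) :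
    z = (z.re : QuadraticAlgebra ℤ a b) := by
  have him : z.im = 0 := by
    have := congrArg im hz
    simp only [im_star] at this
    omega
  ext <;> simp [him]

theorem mul_star_eq_intCast_norm (z : QuadraticAlgebra ℤ a b) :
    z * star z = ((norm z : ℤ) : QuadraticAlgebra ℤ a b) := by
  rw [← algebraMap_norm_eq_mul_star, algebraMap_int_eq, eq_intCast]

theorem star_eq_or_eq_neg_of_mul_star_eq {α α' : QuadraticAlgebra ℤ a b}
    (w : (QuadraticAlgebra ℤ a b)ˣ) (s : ℤˣ)
    (h : α' * star α = ((s : ℤ) : QuadraticAlgebra ℤ a b) * w ^ 2 * (star α' * α)) :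
    star (α' * star (w * α)) = α' * star (w * α) ∨
      star (α' * star (w * α)) = -(α' * star (w * α)) := by
  -- `γ = α'ᾱw̄ = s w² ᾱ'α w̄ = s N(w) · wᾱ'α = s N(w) γ̄`, with `s, N(w) = ±1`
  have hw := mul_star_eq_intCast_norm (w : QuadraticAlgebra ℤ a b)
  simp only [star_mul, star_star]
  rcases Int.isUnit_iff.mp (isUnit_iff_norm_isUnit.mp w.isUnit) with hη | hη <;>
    rcases Int.units_eq_one_or s with rfl | rfl <;>
    simp only [hη, Units.val_one, Units.val_neg, Int.cast_one, Int.cast_neg] at h hw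
  · left; linear_combination (-star (w : QuadraticAlgebra ℤ a b)) * h - w * star α' * α * hw
  · right; linear_combination star (w : QuadraticAlgebra ℤ a b) * h - w * star α' * α * hw
  · right; linear_combination star (w : QuadraticAlgebra ℤ a b) * h + w * star α' * α * hw
  · left; linear_combination (-star (w : QuadraticAlgebra ℤ a b)) * h + w * star α' * α * hw

end QuadraticAlgebra

namespace RealQuadratic

open QuadraticAlgebra

variable {d : ℤ}

/-- `ω² = c + e ω` with `(c, e) = ((d - 1) / 4, 1)` if `d ≡ 1 mod 4` and `(d, 0)` otherwise. -/
def omegaSqRe (d : ℤ) : ℤ := if d % 4 = 1 then (d - 1) / 4 else d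

def omegaSqIm (d : ℤ) : ℤ := if d % 4 = 1 then 1 else 0

theorem omegaSq_of_emod_four_eq_one (h : d % 4 = 1) :
    omegaSqRe d = (d - 1) / 4 ∧ omegaSqIm d = 1 :=
  ⟨if_pos h, if_pos h⟩

theorem omegaSq_of_emod_four_ne_one (h : ¬d % 4 = 1) : omegaSqRe d = d ∧ omegaSqIm d = 0 :=
  ⟨if_neg h, if_neg h⟩

abbrev IntegerRing (d : ℤ) := QuadraticAlgebra ℤ (omegaSqRe d) (omegaSqIm d)

theorem omgR_mul_self (hd : 0 ≤ d) :
    omgR d * omgR d = omegaSqRe d • (1 : ℝ) + omegaSqIm d • omgR d := by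
  have hsq : √(d : ℝ) * √(d : ℝ) = d := Real.mul_self_sqrt (by exact_mod_cast hd)
  unfold omgR omegaSqRe omegaSqIm
  split_ifs with h
  · obtain ⟨t, rfl⟩ : ∃ t, d = 4 * t + 1 := ⟨d / 4, by omega⟩
    rw [show (4 * t + 1 - 1) / 4 = t by omega] at *
    simp only [zsmul_eq_mul, Int.cast_one, mul_one, one_mul]
    push_cast at hsq ⊢
    linear_combination hsq / 4
  · simpa using hsq

theorem omgRBar_eq : omgRBar d = omegaSqIm d - omgR d := by
  unfold omgRBar omegaSqIm omgR
  split_ifs <;> push_cast <;> ring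

noncomputable def toReal (hd : 0 ≤ d) : IntegerRing d →ₐ[ℤ] ℝ :=
  lift ⟨omgR d, omgR_mul_self hd⟩

theorem toReal_mk (hd : 0 ≤ d) (x y : ℤ) : toReal hd ⟨x, y⟩ = eltR d x y := by
  simp [toReal, eltR]

theorem toReal_star_mk (hd : 0 ≤ d) (x y : ℤ) : toReal hd (star ⟨x, y⟩) = eltRBar d x y := by
  simp only [toReal, star_mk, lift_apply_apply, zsmul_eq_mul, eltRBar, omgRBar_eq]
  push_cast
  ring

theorem norm_mk (x y : ℤ) : norm (⟨x, y⟩ : IntegerRing d) = NrmR d x y := by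
  rw [norm_def, NrmR, omegaSqRe, omegaSqIm]
  split_ifs with h
  · rw [show (1 - d) / 4 = -((d - 1) / 4) by omega]
    ring
  · ring

theorem inOR_toReal (hd : 0 ≤ d) (z : IntegerRing d) : InOR d (toReal hd z) :=
  ⟨z.re, z.im, toReal_mk hd z.re z.im⟩

theorem irrational_omgR (hd : Squarefree d) (hdpos : 0 < d) (hd1 : d ≠ 1) :
    Irrational (omgR d) := by
  have hsqrt : Irrational √(d : ℝ) := by
    rw [irrational_sqrt_intCast_iff_of_nonneg hdpos.le]
    rintro ⟨r, hr⟩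
    rcases Int.isUnit_iff.mp (hd r ⟨1, by rw [hr, mul_one]⟩) with rfl | rfl <;> simp_all
  unfold omgR
  split_ifs
  · exact_mod_cast (hsqrt.natCast_add 1).div_natCast two_ne_zero
  · exact hsqrt

theorem toReal_injective (hd : Squarefree d) (hdpos : 0 < d) (hd1 : d ≠ 1) :
    Function.Injective (toReal hdpos.le) := by
  refine (injective_iff_map_eq_zero _).mpr fun z hz => ?_
  have hirr := irrational_omgR hd hdpos hd1
  simp only [toReal, lift_apply_apply, zsmul_eq_mul, mul_one] at hz
  have him : z.im = 0 := by
    by_contra h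
    exact ((hirr.intCast_mul h).intCast_add z.re).ne_zero hz
  rw [him, Int.cast_zero, zero_mul, add_zero, Int.cast_eq_zero] at hz
  ext <;> assumption

theorem isUnitOR_iff (hd : Squarefree d) (hdpos : 0 < d) (hd1 : d ≠ 1) {x : ℝ} :
    IsUnitOR d x ↔ ∃ u : (IntegerRing d)ˣ, toReal hdpos.le u = x := by
  have hinj := toReal_injective hd hdpos hd1
  constructor
  · rintro ⟨⟨p, q, rfl⟩, y, ⟨p', q', rfl⟩, hxy⟩
    rw [← toReal_mk hdpos.le, ← toReal_mk hdpos.le, ← map_mul, ← map_one (toReal hdpos.le)] at hxy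
    exact ⟨(IsUnit.of_mul_eq_one _ (hinj hxy)).unit, toReal_mk _ _ _⟩
  · rintro ⟨u, rfl⟩
    refine ⟨inOR_toReal _ _, _, inOR_toReal hdpos.le ↑u⁻¹, ?_⟩
    rw [← map_mul, Units.mul_inv, map_one]

/-- `√d`, which is `2ω - 1` if `d ≡ 1 mod 4` and `ω` otherwise. -/
def sqrtD (d : ℤ) : IntegerRing d := if d % 4 = 1 then ⟨-1, 2⟩ else ⟨0, 1⟩

theorem norm_sqrtD : norm (sqrtD d) = -d := by
  rw [sqrtD]
  split_ifs with h
  · obtain ⟨hc, he⟩ := omegaSq_of_emod_four_eq_one h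
    simp only [norm_def, hc, he]
    omega
  · obtain ⟨hc, he⟩ := omegaSq_of_emod_four_ne_one h
    simp only [norm_def, hc, he]
    ring

theorem exists_eq_smul_sqrtD_of_star_eq_neg {z : IntegerRing d} (hz : star z = -z) :
    ∃ r : ℤ, z = r • sqrtD d := by
  obtain ⟨x, y⟩ := z
  have hre := congrArg re hz
  simp only [re_star, re_neg] at hre
  rw [sqrtD]
  split_ifs with h
  · rw [(omegaSq_of_emod_four_eq_one h).2] at hre
    exact ⟨-x, by ext <;> simp; omega⟩
  · rw [(omegaSq_of_emod_four_ne_one h).2] at hre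
    exact ⟨y, by ext <;> simp; omega⟩

theorem content_sqrtD_mul (hd : Squarefree d) {β : IntegerRing d} (hβ : content β = 1) :
    content (sqrtD d * β) = Int.gcd (norm β) d := by
  obtain ⟨P, Q⟩ := β
  have hPQ : IsCoprime P Q := Int.isCoprime_iff_gcd_eq_one.mpr hβ
  rw [sqrtD]
  split_ifs with h
  · obtain ⟨hc, he⟩ := omegaSq_of_emod_four_eq_one h
    obtain ⟨t, ht, hd4⟩ : ∃ t, (d - 1) / 4 = t ∧ d = 4 * t + 1 := ⟨(d - 1) / 4, rfl, by omega⟩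
    simp only [content, norm_def, mk_mul_mk, hc, he, ht]
    convert Int.gcd_sub_mul_eq_gcd_of_dvd_sub_sq 2 hd (hPQ.neg_left.add_mul_left_left (2 * t))
      ⟨Q * (P - t * Q), ?_⟩ using 2
    · ring
    · linear_combination -Q * hd4
    · linear_combination -Q * (P - t * Q) * hd4
  · obtain ⟨hc, he⟩ := omegaSq_of_emod_four_ne_one h
    simp only [content, norm_def, mk_mul_mk, hc, he]
    rw [Int.gcd_comm]
    convert Int.gcd_sub_mul_eq_gcd_of_dvd_sub_sq 0 hd hPQ ⟨-Q ^ 2, ?_⟩ using 2 <;> ring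

theorem toReal_ne_zero_of_content_eq_one (hd : Squarefree d) (hdpos : 0 < d) (hd1 : d ≠ 1)
    {z : IntegerRing d} (hz : content z = 1) :
    toReal hdpos.le z ≠ 0 ∧ toReal hdpos.le (star z) ≠ 0 := by
  have hinj := toReal_injective hd hdpos hd1
  have hz0 := ne_zero_of_content_eq_one hz
  exact ⟨(map_ne_zero_iff _ hinj).mpr hz0, (map_ne_zero_iff _ hinj).mpr (star_ne_zero.mpr hz0)⟩

theorem simR_of_intCast_mul_eq (hd : Squarefree d) (hdpos : 0 < d) (hd1 : d ≠ 1)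
    {α α' : IntegerRing d} (w : (IntegerRing d)ˣ) {u n : ℤ} (hu : u ≠ 0) (hn : n ≠ 0)
    (h : (u : IntegerRing d) * (w * α) = n * α') :
    SimR d (toReal hdpos.le α) (toReal hdpos.le α') := by
  have hsign : IsUnit (u.sign * n.sign) := Int.isUnit_iff_natAbs_eq.mpr <| by
    rw [Int.natAbs_mul, Int.natAbs_sign_of_ne_zero hu, Int.natAbs_sign_of_ne_zero hn]
  -- `v = sign u · sign n · w⁻¹` turns `n α' = u w α` into `v |n| α' = |u| α`
  set v : IntegerRing d := ((u.sign * n.sign : ℤ) : IntegerRing d) * ↑w⁻¹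
  have hv : IsUnit v := (hsign.map (Int.castRingHom _)).mul (Units.isUnit _)
  have hrel : v * (n.natAbs : IntegerRing d) * α' = (u.natAbs : IntegerRing d) * α := by
    have h1 := congrArg (Int.cast : ℤ → IntegerRing d) (Int.sign_mul_natAbs n)
    have h2 := congrArg (Int.cast : ℤ → IntegerRing d) (Int.sign_mul_self u)
    have h3 := Units.inv_mul w
    simp only [Int.cast_mul, Int.cast_natCast] at h1 h2
    simp only [v, Int.cast_mul]
    linear_combination (↑u.sign * ↑w⁻¹ * α') * h1 - (u.sign : IntegerRing d) * ↑w⁻¹ * h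
      + α * h2 + u.sign * u * α * h3
  refine ⟨toReal hdpos.le v, (isUnitOR_iff hd hdpos hd1).2 ⟨hv.unit, rfl⟩, _, _,
    Int.natAbs_pos.mpr hn, Int.natAbs_pos.mpr hu, ?_⟩
  simpa using congrArg (toReal hdpos.le) hrel

theorem abs_norm_eq_of_smul_sqrtD_mul_eq (hd : Squarefree d) {β α' : IntegerRing d}
    (hβ : content β = 1) (hα' : content α' = 1) {r : ℤ}
    (h : r • (sqrtD d * β) = norm β • α') :
    |norm β| = |r| * Int.gcd (norm β) d := by
  have := congrArg content h
  rw [content_smul, content_smul, hα', content_sqrtD_mul hd hβ, mul_one] at this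
  rw [← Int.natCast_natAbs, ← Int.natCast_natAbs, ← this, Nat.cast_mul]

theorem exists_abs_norm_mul_eq (hd : Squarefree d) (hdpos : 0 < d) (hd1 : d ≠ 1)
    {α α' : IntegerRing d} (hα : content α = 1) (hα' : content α' = 1)
    (w : (IntegerRing d)ˣ) (s : ℤˣ)
    (h : α' * star α = ((s : ℤ) : IntegerRing d) * w ^ 2 * (star α' * α))
    (hnsim : ¬SimR d (toReal hdpos.le α) (toReal hdpos.le α')) :
    ∃ r : ℤ, |norm α * norm α'| = d * r ^ 2 ∧ |norm α| = |r| * Int.gcd (norm α) d := by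
  have := (toReal_injective hd hdpos hd1).isDomain (toReal hdpos.le)
  have hdich := star_eq_or_eq_neg_of_mul_star_eq w s h
  set β : IntegerRing d := w * α with hβdef
  clear_value β
  have hβ : content β = 1 := hβdef ▸ (content_units_mul w α).trans hα
  have hβ0 := ne_zero_of_content_eq_one hβ
  have hγ0 : α' * star β ≠ 0 := mul_ne_zero (ne_zero_of_content_eq_one hα') (star_ne_zero.mpr hβ0)
  have hnormβ0 : norm β ≠ 0 := fun h0 => mul_ne_zero hβ0 (star_ne_zero.mpr hβ0) <| by
    rw [mul_star_eq_intCast_norm, h0, Int.cast_zero]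
  have hnormβ : norm β = norm α ∨ norm β = -norm α := by
    rcases Int.isUnit_iff.mp (isUnit_iff_norm_isUnit.mp w.isUnit) with hw | hw <;> simp [hβdef, hw]
  have hγβ : α' * star β * β = ((norm β : ℤ) : IntegerRing d) * α' := by
    rw [mul_assoc, mul_comm (star β), mul_star_eq_intCast_norm, mul_comm]
  rcases hdich with hγ | hγ
  · refine absurd (simR_of_intCast_mul_eq hd hdpos hd1 w (u := (α' * star β).re) ?_ hnormβ0 ?_)
      hnsim
    · exact fun h0 => hγ0 (by rw [eq_intCast_of_star_eq hγ, h0, Int.cast_zero])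
    · rw [← eq_intCast_of_star_eq hγ, ← hβdef, hγβ]
  · obtain ⟨r, hr⟩ := exists_eq_smul_sqrtD_of_star_eq_neg hγ
    have hnorm := congrArg QuadraticAlgebra.norm hr
    rw [map_mul, QuadraticAlgebra.norm_star, zsmul_eq_mul, map_mul, norm_intCast,
      norm_sqrtD] at hnorm
    have habs := abs_norm_eq_of_smul_sqrtD_mul_eq hd hβ hα' (r := r) (by
      rw [← smul_mul_assoc, ← hr, hγβ, zsmul_eq_mul])
    refine ⟨r, ?_, ?_⟩
    · rw [abs_eq (by positivity)]
      rcases hnormβ with hb | hb <;> rw [hb] at hnorm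
      · exact .inr (by linear_combination hnorm)
      · exact .inl (by linear_combination -hnorm)
    · rcases hnormβ with hb | hb <;> rw [hb] at habs <;> simpa using habs

end RealQuadratic

open RealQuadratic

/-- In a real quadratic field with fundamental unit ε: if α, α' are
    non-equivalent visible points with log|α/ᾱ| ≡ log|α'/ᾱ'| mod log|ε²|
    (i.e. φ(π(α)) = φ(π(α')) = ξ), then
    M(ξ) = √(|N(α)N(α')|) = √d·|N(α)| / gcd(N(α), d). -/
theorem M_formula
    (d : ℤ) (hd : Squarefree d) (hdpos : 0 < d) (hd1 : d ≠ 1)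
    (ε : ℝ) (hε : IsFundamentalUnit d ε)
    (a b a' b' : ℤ) (hab : Int.gcd a b = 1) (hab' : Int.gcd a' b' = 1)
    (hnsim : ¬ SimR d (eltR d a b) (eltR d a' b'))
    (hcong : ∃ k : ℤ,
      Real.log |eltR d a' b' / eltRBar d a' b'| -
        Real.log |eltR d a b / eltRBar d a b| = (k : ℝ) * Real.log (ε ^ 2)) :
    Real.sqrt ((|NrmR d a b * NrmR d a' b'| : ℤ) : ℝ) =
      Real.sqrt (d : ℝ) * ((|NrmR d a b| : ℤ) : ℝ) /
        ((Int.gcd (NrmR d a b) d : ℕ) : ℝ) := by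
  have hd0 := hdpos.le
  obtain ⟨k, hk⟩ := hcong
  obtain ⟨w, hw⟩ := (isUnitOR_iff hd hdpos hd1).1 ((hε _).2 ⟨k, .inl rfl⟩)
  obtain ⟨-, y, -, hεy⟩ := (hε ε).2 ⟨1, .inl (zpow_one ε).symm⟩
  have hne {x y : ℤ} (h : Int.gcd x y = 1) := toReal_ne_zero_of_content_eq_one hd hdpos hd1
    (z := ⟨x, y⟩) h
  rw [← toReal_mk hd0, ← toReal_mk hd0, ← toReal_star_mk hd0, ← toReal_star_mk hd0] at hk
  obtain ⟨s, hs⟩ := Real.exists_sign_mul_of_log_abs_div_sub (hne hab).1 (hne hab).2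
    (hne hab').1 (hne hab').2 (left_ne_zero_of_mul_eq_one hεy) hk
  have hrel : (⟨a', b'⟩ : IntegerRing d) * star ⟨a, b⟩ =
      ((s : ℤ) : IntegerRing d) * w ^ 2 * (star ⟨a', b'⟩ * ⟨a, b⟩) :=
    toReal_injective hd hdpos hd1 (by simp only [map_mul, map_pow, map_intCast, hw]; exact hs)
  rw [← toReal_mk hd0, ← toReal_mk hd0] at hnsim
  obtain ⟨r, h1, h2⟩ :=
    exists_abs_norm_mul_eq hd hdpos hd1 (α := ⟨a, b⟩) (α' := ⟨a', b'⟩) hab hab' w s hrel hnsim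
  simp only [norm_mk] at h1 h2
  exact Real.sqrt_abs_mul_eq_of_abs_eq hdpos h1 h2
end

section
/- Let D be a squarefree positive integer and r a positive divisor of D. For every nonzero integer n, Σ_{ℓ | D/r} μ(ℓ) Σ_{k | rℓ} μ(k) e_k(n) equals 1 if gcd(n, D) = r and equals 0 otherwise, where the sums run over positive divisors, μ is the Möbius function, and e_k(n) = 1 if gcd(n, k) = 1 and e_k(n) = 0 otherwise. -/
/-! The inner sum over `k ∣ rℓ` is the Möbius sum over the divisors of `rℓ` coprime to `n`, which
for squarefree `rℓ` are the divisors of `rℓ / gcd(rℓ, n)`; so it equals `[rℓ ∣ n]`. Since `r` and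
`ℓ` are coprime, `[rℓ ∣ n] = [r ∣ n] [ℓ ∣ n]`, and the outer sum becomes the Möbius sum over the
divisors of `gcd(D/r, n)`, i.e. `[r ∣ n] [gcd(D/r, n) = 1]`, which is `[gcd(n, D) = r]`. -/

open ArithmeticFunction Finset
open scoped ArithmeticFunction.Moebius

theorem Squarefree.coprime_div_gcd {m : ℕ} (hm : Squarefree m) (N : ℕ) :
    (m / m.gcd N).Coprime N := by
  rcases eq_or_ne N 0 with rfl | hN
  · simp [Nat.div_self (Nat.pos_of_ne_zero hm.ne_zero)]
  · exact Nat.coprime_div_gcd_of_squarefree hm hN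

namespace Nat

theorem divisors_filter_coprime_of_squarefree {m : ℕ} (hm : Squarefree m) (N : ℕ) :
    {k ∈ m.divisors | N.Coprime k} = (m / m.gcd N).divisors := by
  have hsplit : m.gcd N * (m / m.gcd N) = m := Nat.mul_div_cancel' (gcd_dvd_left m N)
  have hcop := hm.coprime_div_gcd N
  ext k
  simp only [mem_filter, mem_divisors]
  constructor
  · rintro ⟨⟨hkm, hm0⟩, hNk⟩
    have hkg : k.Coprime (m.gcd N) := hNk.symm.coprime_dvd_right (gcd_dvd_right m N)
    refine ⟨hkg.dvd_of_dvd_mul_left (by rwa [hsplit]), fun h0 => hm0 ?_⟩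
    rw [← hsplit, h0, mul_zero]
  · rintro ⟨hk, -⟩
    exact ⟨⟨hk.trans (div_dvd_of_dvd (gcd_dvd_left m N)), hm.ne_zero⟩,
      hcop.symm.coprime_dvd_right hk⟩

theorem divisors_filter_dvd {s : ℕ} (hs : s ≠ 0) (N : ℕ) :
    {ℓ ∈ s.divisors | ℓ ∣ N} = (s.gcd N).divisors := by
  ext ℓ
  simp [dvd_gcd_iff, hs]

end Nat

namespace ArithmeticFunction

theorem sum_divisors_moebius (m : ℕ) :
    ∑ d ∈ m.divisors, (μ d : ℤ) = if m = 1 then 1 else 0 := by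
  rw [← coe_mul_zeta_apply, moebius_mul_coe_zeta, one_apply]

theorem sum_moebius_divisors_filter_coprime {m : ℕ} (hm : Squarefree m) (N : ℕ) :
    ∑ k ∈ m.divisors with N.Coprime k, (μ k : ℤ) = if m ∣ N then 1 else 0 := by
  have hgm : m.gcd N ∣ m := Nat.gcd_dvd_left m N
  have hdiv : m / m.gcd N = 1 ↔ m ∣ N := by
    rw [← Nat.gcd_eq_left_iff_dvd]
    refine ⟨Nat.eq_of_dvd_of_div_eq_one hgm, fun h => ?_⟩
    rw [h, Nat.div_self (Nat.pos_of_ne_zero hm.ne_zero)]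
  rw [Nat.divisors_filter_coprime_of_squarefree hm, sum_divisors_moebius]
  exact if_congr hdiv rfl rfl

theorem sum_moebius_divisors_filter_dvd {s : ℕ} (hs : s ≠ 0) (N : ℕ) :
    ∑ ℓ ∈ s.divisors with ℓ ∣ N, (μ ℓ : ℤ) = if s.Coprime N then 1 else 0 := by
  rw [Nat.divisors_filter_dvd hs, sum_divisors_moebius]

theorem sum_divisors_moebius_mul_ite_mul_dvd {r s : ℕ} (hrs : r.Coprime s) (hs : s ≠ 0)
    (N : ℕ) :
    ∑ ℓ ∈ s.divisors, (μ ℓ : ℤ) * (if r * ℓ ∣ N then 1 else 0) =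
      if N.gcd (r * s) = r then 1 else 0 := by
  by_cases hrN : r ∣ N
  · have hfactor : ∀ ℓ ∈ s.divisors, r * ℓ ∣ N ↔ ℓ ∣ N := fun ℓ hℓ =>
      ⟨(Nat.dvd_mul_left ℓ r).trans,
        (hrs.coprime_dvd_right (Nat.dvd_of_mem_divisors hℓ)).mul_dvd_of_dvd_of_dvd hrN⟩
    have hgcd : N.gcd (r * s) = r ↔ s.Coprime N := by
      rw [Nat.Coprime.gcd_mul _ hrs, Nat.gcd_eq_right hrN, Nat.coprime_comm]
      rcases eq_or_ne r 0 with rfl | hr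
      · simp [(Nat.coprime_zero_left s).mp hrs]
      · exact mul_eq_left₀ hr
    simp_rw [mul_boole]
    rw [sum_congr rfl fun ℓ hℓ => if_congr (hfactor ℓ hℓ) rfl rfl, ← sum_filter,
      sum_moebius_divisors_filter_dvd hs]
    exact (if_congr hgcd rfl rfl).symm
  · have hgcd : N.gcd (r * s) ≠ r := fun h => hrN (h ▸ Nat.gcd_dvd_left N (r * s))
    rw [if_neg hgcd]
    refine sum_eq_zero fun ℓ _ => ?_
    rw [if_neg fun h => hrN ((Nat.dvd_mul_right r ℓ).trans h), mul_zero]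

theorem sum_divisors_moebius_mul_ite_gcd_eq_one {m : ℕ} (hm : Squarefree m) (n : ℤ) :
    ∑ k ∈ m.divisors, (μ k) * (if Int.gcd n k = 1 then (1 : ℤ) else 0) =
      if m ∣ n.natAbs then 1 else 0 := by
  simp_rw [mul_boole]
  rw [← sum_filter]
  exact sum_moebius_divisors_filter_coprime hm n.natAbs

end ArithmeticFunction

theorem moebius_gcd_indicator_general
    (D r : ℕ) (hD : Squarefree D) (hr : r ∣ D)
    (n : ℤ) :
    (∑ ℓ ∈ (D / r).divisors, (μ ℓ) *
        ∑ k ∈ (r * ℓ).divisors, (μ k) * (if Int.gcd n k = 1 then (1 : ℤ) else 0)) =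
      (if Int.gcd n D = r then (1 : ℤ) else 0) := by
  obtain ⟨s, rfl⟩ := hr
  have hrs : r.Coprime s := (Nat.squarefree_mul_iff.mp hD).1
  rw [Nat.mul_div_cancel_left s (Nat.pos_of_ne_zero (left_ne_zero_of_mul hD.ne_zero))]
  have hinner : ∀ ℓ ∈ s.divisors,
      ∑ k ∈ (r * ℓ).divisors, (μ k) * (if Int.gcd n k = 1 then (1 : ℤ) else 0) =
        if r * ℓ ∣ n.natAbs then 1 else 0 := fun ℓ hℓ =>
    sum_divisors_moebius_mul_ite_gcd_eq_one
      (hD.squarefree_of_dvd (mul_dvd_mul_left r (Nat.dvd_of_mem_divisors hℓ))) n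
  rw [sum_congr rfl fun ℓ hℓ => by rw [hinner ℓ hℓ],
    sum_divisors_moebius_mul_ite_mul_dvd hrs (right_ne_zero_of_mul hD.ne_zero)]
  rfl

/-- Lemma 7: for D squarefree, r a positive divisor of D, and n a nonzero
    integer, Σ_{ℓ | D/r} μ(ℓ) Σ_{k | rℓ} μ(k) e_k(n) = 1 if gcd(n, D) = r and
    0 otherwise, where e_k(n) = 1 if gcd(n,k) = 1 and 0 otherwise. -/
theorem moebius_gcd_indicator
    (D r : ℕ) (hD : Squarefree D) (hDpos : 0 < D) (hr : r ∣ D) (hrpos : 0 < r)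
    (n : ℤ) (hn : n ≠ 0) :
    (∑ ℓ ∈ (D / r).divisors, (μ ℓ) *
        ∑ k ∈ (r * ℓ).divisors, (μ k) * (if Int.gcd n k = 1 then (1 : ℤ) else 0)) =
      (if Int.gcd n D = r then (1 : ℤ) else 0) :=
  moebius_gcd_indicator_general D r hD hr n
end
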